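/- arXiv:2410.05858 — 4 statements merged into one kernel-verified Lean document; each statement's English description precedes it below -/
import Mathlib

section
/- For u,v in (0,1): min(u,v) - uv <= sqrt(uv(1-u)(1-v)) and uv - max(u+v-1,0) <= sqrt(uv(1-u)(1-v)). -/
/-! Both left-hand sides are minima of two numbers whose product is `uv(1-u)(1-v)`:
`min(u,v) - uv = min(u(1-v), v(1-u))` and `uv - max(u+v-1, 0) = min((1-u)(1-v), uv)`.
A minimum never exceeds the geometric mean. -/

theorem Real.min_le_sqrt_mul (a b : ℝ) : min a b ≤ √(a * b) := by
  rcases le_or_gt (min a b) 0 with hmin | hmin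
  · exact hmin.trans (Real.sqrt_nonneg _)
  · calc min a b = √(min a b * min a b) := (Real.sqrt_mul_self hmin.le).symm
      _ ≤ √(a * b) := Real.sqrt_le_sqrt <|
          mul_le_mul (min_le_left a b) (min_le_right a b) hmin.le (hmin.le.trans (min_le_left a b))

lemma min_sub_mul_eq_min (u v : ℝ) : min u v - u * v = min (u * (1 - v)) (v * (1 - u)) := by
  rw [← min_sub_sub_right]
  congr 1 <;> ring

lemma mul_sub_max_eq_min (u v : ℝ) : u * v - max (u + v - 1) 0 = min ((1 - u) * (1 - v)) (u * v) := by
  rw [← min_sub_sub_left]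
  congr 1 <;> ring

theorem stmt_9_general (u v : ℝ) :
    min u v - u * v ≤ Real.sqrt (u * v * (1 - u) * (1 - v)) ∧
    u * v - max (u + v - 1) 0 ≤ Real.sqrt (u * v * (1 - u) * (1 - v)) := by
  constructor
  · rw [min_sub_mul_eq_min]
    convert Real.min_le_sqrt_mul _ _ using 2
    ring
  · rw [mul_sub_max_eq_min]
    convert Real.min_le_sqrt_mul _ _ using 2
    ring

/-- For `u,v ∈ (0,1)`: `min(u,v) - uv ≤ √(uv(1-u)(1-v))` and
`uv - max(u+v-1,0) ≤ √(uv(1-u)(1-v))`. -/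
theorem stmt_9 (u v : ℝ) (hu : u ∈ Set.Ioo (0:ℝ) 1) (hv : v ∈ Set.Ioo (0:ℝ) 1) :
    min u v - u * v ≤ Real.sqrt (u * v * (1 - u) * (1 - v)) ∧
    u * v - max (u + v - 1) 0 ≤ Real.sqrt (u * v * (1 - u) * (1 - v)) :=
  stmt_9_general u v
end

section
/- Under independence of X and Y with continuous margins, for fixed (u,v) in [0,1]^2, E[\bar{C}_n(u,v)] = uv, where the expectation is over the uniformly random pair of rank vectors. -/
/-!
Averaging over the two independent permutations factorises the sum over `i`: since `R` and `S`
are independent, `E[C̄ₙ(u,v)] = (1/n) ∑ᵢ E[w_u(Rᵢ)] E[w_v(Sᵢ)]`, where `w_u` is the interpolated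
indicator of a rank. Each `Rᵢ` is uniform on the ranks, so `E[w_u(Rᵢ)] = (1/n) ∑ₖ w_u(k)`, and the
weights `w_u(k)` are `1` below `⌊nu⌋`, the fractional part `nu - ⌊nu⌋` at the next rank and `0`
above, so they add up to `nu`. Hence every factor is `u` resp. `v` and the mean is `uv`.
-/

open Finset

/-- The multilinear rank representation of the interpolated empirical copula `C̄ₙ`. -/
noncomputable def barRep (n : ℕ) (R S : Equiv.Perm (Fin n)) (u v : ℝ) : ℝ :=
  (1 / n : ℝ) * ∑ i : Fin n,
    ((if (R i : ℕ) + 1 ≤ ⌊(n : ℝ) * u⌋₊ then (1:ℝ) else 0)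
      + ((n : ℝ) * u - (⌊(n : ℝ) * u⌋₊ : ℝ)) *
        (if (R i : ℕ) + 1 = ⌊(n : ℝ) * u⌋₊ + 1 then 1 else 0)) *
    ((if (S i : ℕ) + 1 ≤ ⌊(n : ℝ) * v⌋₊ then (1:ℝ) else 0)
      + ((n : ℝ) * v - (⌊(n : ℝ) * v⌋₊ : ℝ)) *
        (if (S i : ℕ) + 1 = ⌊(n : ℝ) * v⌋₊ + 1 then 1 else 0))

/-- The weight of rank `k + 1` in `C̄ₙ` at the level `u`. -/
noncomputable def interpIndicator (n : ℕ) (u : ℝ) (k : ℕ) : ℝ :=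
  (if k + 1 ≤ ⌊(n : ℝ) * u⌋₊ then 1 else 0)
    + ((n : ℝ) * u - ⌊(n : ℝ) * u⌋₊) * (if k + 1 = ⌊(n : ℝ) * u⌋₊ + 1 then 1 else 0)

theorem barRep_eq_sum_interpIndicator (n : ℕ) (R S : Equiv.Perm (Fin n)) (u v : ℝ) :
    barRep n R S u v =
      (1 / n : ℝ) * ∑ i, interpIndicator n u (R i) * interpIndicator n v (S i) := rfl

theorem sum_range_interpIndicator (n : ℕ) {u : ℝ} (hu : u ≤ 1) :
    ∑ k ∈ range n, interpIndicator n u k = n * u := by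
  rcases Nat.eq_zero_or_pos n with rfl | hn
  · simp
  simp only [interpIndicator, sum_add_distrib]
  set a := ⌊(n : ℝ) * u⌋₊
  have hfloor : ∑ k ∈ range n, (if k + 1 ≤ a then 1 else 0 : ℝ) = min a n := by
    rw [sum_boole, (by ext; simp; omega : {k ∈ range n | k + 1 ≤ a} = range (min a n))]
    simp
  have hfrac : ∑ k ∈ range n, (n * u - a) * (if k + 1 = a + 1 then 1 else 0 : ℝ) =
      if a < n then n * u - a else 0 := by
    simp
  rw [hfloor, hfrac]
  split_ifs with ha
  · rw [Nat.cast_min, min_eq_left (by exact_mod_cast ha.le)]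
    ring
  · have hnu : (n : ℝ) ≤ n * u := (Nat.le_floor_iff' hn.ne').mp (not_lt.mp ha)
    rw [min_eq_right (not_lt.mp ha)]
    nlinarith [mul_le_of_le_one_right (Nat.cast_nonneg n) hu]

/-- Each value `σ a` of a uniformly random permutation is uniformly distributed. -/
theorem Equiv.Perm.card_nsmul_sum_apply {α M : Type*} [Fintype α] [DecidableEq α]
    [AddCommMonoid M] (g : α → M) (a : α) :
    Fintype.card α • ∑ σ : Perm α, g (σ a) = (Fintype.card α).factorial • ∑ x, g x := by
  have hconst : ∀ b, ∑ σ : Perm α, g (σ b) = ∑ σ : Perm α, g (σ a) := fun b =>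
    Fintype.sum_equiv (Equiv.mulRight (Equiv.swap a b)) _ _ fun σ => by simp
  calc Fintype.card α • ∑ σ : Perm α, g (σ a)
      = ∑ b, ∑ σ : Perm α, g (σ b) := by simp [hconst]
    _ = ∑ σ : Perm α, ∑ x, g x := by
      rw [sum_comm]
      simp_rw [Equiv.sum_comp]
    _ = (Fintype.card α).factorial • ∑ x, g x := by simp [Fintype.card_perm]

theorem sum_perm_interpIndicator {n : ℕ} {u : ℝ} (hu : u ≤ 1) (i : Fin n) :
    ∑ σ : Equiv.Perm (Fin n), interpIndicator n u (σ i) = n.factorial * u := by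
  have h := Equiv.Perm.card_nsmul_sum_apply (fun k : Fin n => interpIndicator n u k) i
  simp only [Fintype.card_fin, nsmul_eq_mul, Fin.sum_univ_eq_sum_range (interpIndicator n u),
    sum_range_interpIndicator n hu] at h
  have hn : (n : ℝ) ≠ 0 := by
    have := i.pos
    positivity
  exact mul_left_cancel₀ hn (by rw [h]; ring)

/-- Under independence (i.e. averaging over independent uniformly random rank permutations),
`E[C̄ₙ(u,v)] = uv`. -/
theorem stmt_14 (n : ℕ) (hn : 0 < n)
    (u v : ℝ) (hu : u ∈ Set.Icc (0:ℝ) 1) (hv : v ∈ Set.Icc (0:ℝ) 1) :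
    (∑ R : Equiv.Perm (Fin n), ∑ S : Equiv.Perm (Fin n), barRep n R S u v)
        / ((Nat.factorial n : ℝ))^2 = u * v := by
  have hsum : ∑ R : Equiv.Perm (Fin n), ∑ S : Equiv.Perm (Fin n), barRep n R S u v =
      (1 / n : ℝ) * ∑ i : Fin n, (∑ R : Equiv.Perm (Fin n), interpIndicator n u (R i)) *
        ∑ S : Equiv.Perm (Fin n), interpIndicator n v (S i) := by
    simp_rw [sum_mul_sum, barRep_eq_sum_interpIndicator, mul_sum]
    exact sum_comm_cycle
  rw [hsum]
  simp only [sum_perm_interpIndicator hu.2, sum_perm_interpIndicator hv.2, sum_const,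
    card_univ, Fintype.card_fin, nsmul_eq_mul]
  have hn' : (n : ℝ) ≠ 0 := by positivity
  have hfac : (n.factorial : ℝ) ≠ 0 := by positivity
  field_simp
end

section
/- Under independence (uniformly random independent rank permutations), Var(\bar{C}_n(u,v)) = (n-1)^{-1} {u(1-u) - eps_n(u)}{v(1-v) - eps_n(v)}, where eps_n(t) = n^{-1} (nt - floor(nt))(1 - (nt - floor(nt))). -/
/-- `εₙ(t) = n⁻¹(nt − ⌊nt⌋)(1 − (nt − ⌊nt⌋))`. -/
noncomputable def epsn (n : ℕ) (t : ℝ) : ℝ :=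
  ((n : ℝ) * t - (⌊(n : ℝ) * t⌋₊ : ℝ)) * (1 - ((n : ℝ) * t - (⌊(n : ℝ) * t⌋₊ : ℝ))) / n

open Equiv
open scoped Nat

theorem Fintype.sum_sum_sum_mul_eq_sum_mul_sum {β γ ι M : Type*} [Fintype β] [Fintype γ]
    [Fintype ι] [CommSemiring M] (F : β → ι → M) (G : γ → ι → M) :
    (∑ x, ∑ y, ∑ i, F x i * G y i) = ∑ i, (∑ x, F x i) * ∑ y, G y i := by
  simp only [Finset.sum_mul_sum]
  exact (Finset.sum_congr rfl fun _ _ => Finset.sum_comm).trans Finset.sum_comm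

theorem Fintype.sum_sum_eq_of_diag_of_offDiag {α M : Type*} [Fintype α] [DecidableEq α]
    [CommRing M] (g : α → α → M) (d o : M) (hd : ∀ i, g i i = d)
    (ho : ∀ i j, i ≠ j → g i j = o) :
    ∑ i, ∑ j, g i j = Fintype.card α * d + Fintype.card α * (Fintype.card α - 1) * o := by
  have row : ∀ i, ∑ j, g i j = d + (Fintype.card α - 1) * o := by
    intro i
    have : Nonempty α := ⟨i⟩
    rw [← Finset.add_sum_erase _ _ (Finset.mem_univ i), hd,
      Finset.sum_congr rfl fun j hj => ho i j (Finset.ne_of_mem_erase hj).symm,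
      Finset.sum_const, Finset.card_erase_of_mem (Finset.mem_univ i), Finset.card_univ,
      nsmul_eq_mul, Nat.cast_pred Fintype.card_pos]
  simp only [row, Finset.sum_const, Finset.card_univ, nsmul_eq_mul]
  ring

namespace Equiv.Perm

theorem exists_apply_eq_and_apply_eq {α : Type*} [DecidableEq α] {i j i' j' : α}
    (hij : i ≠ j) (hij' : i' ≠ j') : ∃ τ : Perm α, τ i = i' ∧ τ j = j' := by
  refine ⟨swap (swap i i' j) j' * swap i i', ?_, swap_apply_left _ _⟩
  have hj : swap i i' j ≠ i' := by
    simpa only [swap_apply_left] using (swap i i').injective.ne hij.symm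
  simp only [Perm.mul_apply, swap_apply_left]
  exact swap_apply_of_ne_of_ne hj.symm hij'

variable {α M : Type*} [Fintype α] [DecidableEq α]

section AddCommMonoid

variable [AddCommMonoid M]

theorem sum_apply_eq (f : α → M) (i i' : α) :
    ∑ σ : Perm α, f (σ i) = ∑ σ : Perm α, f (σ i') :=
  Fintype.sum_equiv (Equiv.mulRight (swap i' i)) _ _ fun σ => by simp

theorem sum_apply_apply_eq (g : α → α → M) {i j i' j' : α} (hij : i ≠ j) (hij' : i' ≠ j') :
    ∑ σ : Perm α, g (σ i) (σ j) = ∑ σ : Perm α, g (σ i') (σ j') := by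
  obtain ⟨τ, hi, hj⟩ := exists_apply_eq_and_apply_eq hij' hij
  exact Fintype.sum_equiv (Equiv.mulRight τ) _ _ fun σ => by simp [hi, hj]

theorem card_nsmul_sum_apply_s15 (f : α → M) (i : α) :
    Fintype.card α • ∑ σ : Perm α, f (σ i) = (Fintype.card α)! • ∑ x, f x := by
  calc Fintype.card α • ∑ σ : Perm α, f (σ i)
      = ∑ k : α, ∑ σ : Perm α, f (σ k) := by
        rw [Finset.sum_congr rfl fun k _ => sum_apply_eq f k i, Finset.sum_const,
          Finset.card_univ]
    _ = ∑ σ : Perm α, ∑ x, f x :=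
        Finset.sum_comm.trans (Finset.sum_congr rfl fun σ _ => Equiv.sum_comp σ f)
    _ = (Fintype.card α)! • ∑ x, f x := by
        rw [Finset.sum_const, Finset.card_univ, Fintype.card_perm]

end AddCommMonoid

theorem card_mul_card_sub_one_mul_sum_apply_mul_apply [CommRing M] (f : α → M) {i j : α}
    (hij : i ≠ j) :
    (Fintype.card α : M) * (Fintype.card α - 1) * ∑ σ : Perm α, f (σ i) * f (σ j)
      = (Fintype.card α)! * ((∑ x, f x) ^ 2 - ∑ x, f x ^ 2) := by
  have hdiag : (Fintype.card α : M) * ∑ σ : Perm α, f (σ i) ^ 2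
      = (Fintype.card α)! * ∑ x, f x ^ 2 := by
    simpa only [nsmul_eq_mul] using card_nsmul_sum_apply_s15 (fun x => f x ^ 2) i
  have hall : ∑ k, ∑ l, ∑ σ : Perm α, f (σ k) * f (σ l)
      = (Fintype.card α)! * (∑ x, f x) ^ 2 := by
    calc ∑ k, ∑ l, ∑ σ : Perm α, f (σ k) * f (σ l)
        = ∑ σ : Perm α, (∑ k, f (σ k)) * ∑ l, f (σ l) := by
          simp only [Finset.sum_mul_sum]
          exact (Finset.sum_congr rfl fun _ _ => Finset.sum_comm).trans Finset.sum_comm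
      _ = (Fintype.card α)! * (∑ x, f x) ^ 2 := by
          simp only [Equiv.sum_comp, ← sq, Finset.sum_const, Finset.card_univ,
            Fintype.card_perm, nsmul_eq_mul]
  have hsplit := Fintype.sum_sum_eq_of_diag_of_offDiag
    (fun k l => ∑ σ : Perm α, f (σ k) * f (σ l))
    (∑ σ : Perm α, f (σ i) ^ 2) (∑ σ : Perm α, f (σ i) * f (σ j))
    (fun k => by simp only [← sq]; exact sum_apply_eq (fun x => f x ^ 2) k i)
    (fun k l hkl => sum_apply_apply_eq (fun x y => f x * f y) hkl hij)
  linear_combination hsplit.symm.trans hall - hdiag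

section Field

variable {K : Type*} [Field K] [CharZero K]

theorem sum_apply_eq_factorial_mul_div (f : α → K) (i : α) :
    ∑ σ : Perm α, f (σ i) = (Fintype.card α)! * ((∑ x, f x) / Fintype.card α) := by
  have : Nonempty α := ⟨i⟩
  have hN : (Fintype.card α : K) ≠ 0 := Nat.cast_ne_zero.mpr Fintype.card_ne_zero
  rw [mul_div_assoc', eq_div_iff hN, mul_comm]
  simpa only [nsmul_eq_mul] using card_nsmul_sum_apply_s15 f i

theorem sum_apply_mul_apply_eq_factorial_mul_div (f : α → K) {i j : α} (hij : i ≠ j) :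
    ∑ σ : Perm α, f (σ i) * f (σ j)
      = (Fintype.card α)! * (((∑ x, f x) ^ 2 - ∑ x, f x ^ 2)
          / (Fintype.card α * (Fintype.card α - 1))) := by
  have : Nontrivial α := ⟨⟨i, j, hij⟩⟩
  have hN : (Fintype.card α : K) * (Fintype.card α - 1) ≠ 0 := by
    refine mul_ne_zero (Nat.cast_ne_zero.mpr Fintype.card_ne_zero) (sub_ne_zero.mpr ?_)
    exact_mod_cast Fintype.one_lt_card.ne'
  rw [mul_div_assoc', eq_div_iff hN, mul_comm]
  exact card_mul_card_sub_one_mul_sum_apply_mul_apply f hij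

end Field

end Equiv.Perm

section LinearRankStatistic

variable {α K : Type*} [Fintype α] [Field K]

def linearRankStatistic (a b : α → K) (R S : Perm α) : K :=
  1 / Fintype.card α * ∑ i, a (R i) * b (S i)

def empiricalVariance (a : α → K) : K :=
  (∑ x, a x ^ 2) / Fintype.card α - ((∑ x, a x) / Fintype.card α) ^ 2

theorem linearRankStatistic_sq (a b : α → K) (R S : Perm α) :
    linearRankStatistic a b R S ^ 2 = 1 / (Fintype.card α : K) ^ 2 *
      ∑ p : α × α, a (R p.1) * a (R p.2) * (b (S p.1) * b (S p.2)) := by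
  rw [linearRankStatistic, mul_pow, sq (∑ i, _), Finset.sum_mul_sum, ← Finset.sum_product',
    one_div_pow]
  congr 1
  exact Finset.sum_congr rfl fun p _ => by ring

variable [DecidableEq α] [CharZero K]

theorem sum_sum_linearRankStatistic [Nonempty α] (a b : α → K) :
    ∑ R : Perm α, ∑ S : Perm α, linearRankStatistic a b R S
      = ((Fintype.card α)! : K) ^ 2 * ((∑ x, a x) / Fintype.card α)
          * ((∑ x, b x) / Fintype.card α) := by
  have hN : (Fintype.card α : K) ≠ 0 := Nat.cast_ne_zero.mpr Fintype.card_ne_zero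
  simp only [linearRankStatistic, ← Finset.mul_sum, Fintype.sum_sum_sum_mul_eq_sum_mul_sum,
    Perm.sum_apply_eq_factorial_mul_div, Finset.sum_const, Finset.card_univ, nsmul_eq_mul]
  field_simp

theorem sum_sum_linearRankStatistic_sq (a b : α → K) :
    ∑ R : Perm α, ∑ S : Perm α, linearRankStatistic a b R S ^ 2
      = ((Fintype.card α)! : K) ^ 2 / (Fintype.card α) ^ 3 *
          ((∑ x, a x ^ 2) * (∑ x, b x ^ 2) + ((∑ x, a x) ^ 2 - ∑ x, a x ^ 2)
            * ((∑ x, b x) ^ 2 - ∑ x, b x ^ 2) / (Fintype.card α - 1)) := by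
  have diag : ∀ (f : α → K) k, ∑ σ : Perm α, f (σ k) * f (σ k)
      = (Fintype.card α)! * ((∑ x, f x ^ 2) / Fintype.card α) := fun f k => by
    simp only [← sq]
    exact Perm.sum_apply_eq_factorial_mul_div (fun x => f x ^ 2) k
  simp only [linearRankStatistic_sq, ← Finset.mul_sum]
  rw [Fintype.sum_sum_sum_mul_eq_sum_mul_sum, Fintype.sum_prod_type,
    Fintype.sum_sum_eq_of_diag_of_offDiag _ _ _ (fun k => by rw [diag a k, diag b k])
      (fun k l hkl => by rw [Perm.sum_apply_mul_apply_eq_factorial_mul_div a hkl,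
        Perm.sum_apply_mul_apply_eq_factorial_mul_div b hkl])]
  field_simp

theorem linearRankStatistic_variance (h : 1 < Fintype.card α) (a b : α → K) :
    (∑ R : Perm α, ∑ S : Perm α, linearRankStatistic a b R S ^ 2) / ((Fintype.card α)! : K) ^ 2
      - ((∑ R : Perm α, ∑ S : Perm α, linearRankStatistic a b R S)
          / ((Fintype.card α)! : K) ^ 2) ^ 2
      = ((Fintype.card α : K) - 1)⁻¹ * empiricalVariance a * empiricalVariance b := by
  have : Nonempty α := Fintype.card_pos_iff.mp (by omega)
  have hN : (Fintype.card α : K) ≠ 0 := Nat.cast_ne_zero.mpr (by omega)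
  have hN1 : (Fintype.card α : K) - 1 ≠ 0 := sub_ne_zero.mpr (by exact_mod_cast h.ne')
  have hF : ((Fintype.card α)! : K) ≠ 0 := Nat.cast_ne_zero.mpr (Nat.factorial_ne_zero _)
  rw [sum_sum_linearRankStatistic_sq, sum_sum_linearRankStatistic, empiricalVariance,
    empiricalVariance]
  field_simp
  ring

end LinearRankStatistic

section RankScore

variable {K : Type*} [CommSemiring K]

-- Ranks `r : Fin n` are 0-based: the paper's rank is `r + 1`.
def rankScore (n m : ℕ) (x : K) (r : Fin n) : K :=
  (if (r : ℕ) + 1 ≤ m then 1 else 0) + x * (if (r : ℕ) + 1 = m + 1 then 1 else 0)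

theorem rankScore_sq (n m : ℕ) (x : K) (r : Fin n) :
    rankScore n m x r ^ 2 = rankScore n m (x ^ 2) r := by
  unfold rankScore
  by_cases h : (r : ℕ) + 1 ≤ m
  · simp [h, show (r : ℕ) ≠ m by omega]
  · split_ifs <;> ring

theorem sum_rankScore {n m : ℕ} (hm : m ≤ n) (x : K) :
    ∑ r, rankScore n m x r = m + x * if m < n then 1 else 0 := by
  simp only [rankScore, Finset.sum_add_distrib, ← Finset.mul_sum, Nat.add_right_cancel_iff,
    Nat.add_one_le_iff]
  rw [Finset.sum_boole, Fin.card_filter_val_lt, min_eq_right hm,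
    Fin.sum_univ_eq_sum_range (fun k => if k = m then (1 : K) else 0), Finset.sum_ite_eq']
  simp only [Finset.mem_range]

end RankScore

theorem floor_natCast_mul_le {n : ℕ} {t : ℝ} (ht : t ≤ 1) : ⌊(n : ℝ) * t⌋₊ ≤ n :=
  Nat.floor_le_of_le (mul_le_of_le_one_right n.cast_nonneg ht)

theorem natCast_mul_sub_floor_eq_zero {n : ℕ} {t : ℝ} (ht : t ∈ Set.Icc (0 : ℝ) 1)
    (h : ⌊(n : ℝ) * t⌋₊ = n) : (n : ℝ) * t - ⌊(n : ℝ) * t⌋₊ = 0 := by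
  have hle := Nat.floor_le (mul_nonneg n.cast_nonneg ht.1)
  rw [h] at hle ⊢
  linarith [mul_le_of_le_one_right n.cast_nonneg ht.2]

noncomputable def copulaScore (n : ℕ) (t : ℝ) : Fin n → ℝ :=
  rankScore n ⌊(n : ℝ) * t⌋₊ ((n : ℝ) * t - ⌊(n : ℝ) * t⌋₊)

theorem empiricalVariance_copulaScore {n : ℕ} (hn : n ≠ 0) {t : ℝ}
    (ht : t ∈ Set.Icc (0 : ℝ) 1) :
    empiricalVariance (copulaScore n t) = t * (1 - t) - epsn n t := by
  unfold copulaScore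
  have hm := floor_natCast_mul_le (n := n) ht.2
  have hc0 := natCast_mul_sub_floor_eq_zero (n := n) ht
  set m := ⌊(n : ℝ) * t⌋₊
  set c := (n : ℝ) * t - m with hc_def
  -- The interpolated rank `m + 1` is missing only when `m = n`, and then its weight `c` is `0`.
  have hc : c * (if m < n then 1 else 0) = c := by
    split_ifs with h
    · ring
    · rw [hc0 (by omega), zero_mul]
  have hsum : ∑ r, rankScore n m c r = n * t := by
    rw [sum_rankScore hm, hc, hc_def]
    ring
  have hsum_sq : ∑ r, rankScore n m c r ^ 2 = n * t - c * (1 - c) := by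
    simp only [rankScore_sq]
    rw [sum_rankScore hm, sq, mul_assoc, hc, hc_def]
    ring
  have hN : (n : ℝ) ≠ 0 := Nat.cast_ne_zero.mpr hn
  rw [empiricalVariance, Fintype.card_fin, hsum, hsum_sq, epsn]
  field_simp
  ring

/-- Under independence (averaging over independent uniformly random rank permutations),
`Var(C̄ₙ(u,v)) = (n-1)⁻¹ {u(1-u) − εₙ(u)}{v(1-v) − εₙ(v)}`. -/
theorem stmt_15 (n : ℕ) (hn : 2 ≤ n)
    (u v : ℝ) (hu : u ∈ Set.Icc (0:ℝ) 1) (hv : v ∈ Set.Icc (0:ℝ) 1) :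
    (∑ R : Equiv.Perm (Fin n), ∑ S : Equiv.Perm (Fin n), (barRep n R S u v)^2)
          / ((Nat.factorial n : ℝ))^2
        - ((∑ R : Equiv.Perm (Fin n), ∑ S : Equiv.Perm (Fin n), barRep n R S u v)
          / ((Nat.factorial n : ℝ))^2)^2
      = ((n : ℝ) - 1)⁻¹ * (u * (1 - u) - epsn n u) * (v * (1 - v) - epsn n v) := by
  have hbar : ∀ R S, barRep n R S u v
      = linearRankStatistic (copulaScore n u) (copulaScore n v) R S := fun R S => by
    simp only [linearRankStatistic, Fintype.card_fin]
    rfl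
  have hvar := linearRankStatistic_variance (by rw [Fintype.card_fin]; omega)
    (copulaScore n u) (copulaScore n v)
  rw [empiricalVariance_copulaScore (by omega) hu,
    empiricalVariance_copulaScore (by omega) hv] at hvar
  simpa only [hbar, Fintype.card_fin] using hvar
end

section
/- If d(n) -> infinity, d(n)/sqrt(n) -> 0, grid points p_{n,j} = j/(d(n)+1), and C is a continuous copula with C not identically equal to uv on [0,1]^2, then there exist n_0, a_0 > 0 and p_0 > 0 such that for all n > n_0 the number of grid points (p_{n,j}, p_{n,j'}) with |C(p_{n,j}, p_{n,j'}) - p_{n,j} p_{n,j'}| > a_0 is at least p_0 d(n)^2. -/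
open scoped Classical

def IsCopula (C : ℝ → ℝ → ℝ) : Prop :=
  (∀ u ∈ Set.Icc (0:ℝ) 1, C u 0 = 0) ∧
  (∀ v ∈ Set.Icc (0:ℝ) 1, C 0 v = 0) ∧
  (∀ u ∈ Set.Icc (0:ℝ) 1, C u 1 = u) ∧
  (∀ v ∈ Set.Icc (0:ℝ) 1, C 1 v = v) ∧
  (∀ u₁ u₂ v₁ v₂ : ℝ, u₁ ∈ Set.Icc (0:ℝ) 1 → u₂ ∈ Set.Icc (0:ℝ) 1 →
    v₁ ∈ Set.Icc (0:ℝ) 1 → v₂ ∈ Set.Icc (0:ℝ) 1 → u₁ ≤ u₂ → v₁ ≤ v₂ →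
    0 ≤ C u₂ v₂ - C u₁ v₂ - C u₂ v₁ + C u₁ v₁)

/-!
The function `f(u, v) = C(u, v) - uv` is continuous on the closed unit square and nonzero at
some point `z` of it, so `|f| > |f(z)|/2` on a neighbourhood of `z` relative to the square.
For every fixed `r ≤ 1` each point of `[0, 1]` has at least `r(d + 1) - 1` of the grid points
`j/(d + 1)` within distance `r`, so that neighbourhood contains at least `(r d / 2)²` grid
points once `d ≥ 2/r`.
-/

open Finset Filter

lemma grid_mem_Icc {m j : ℕ} (hj : j ∈ Icc 1 m) : (j : ℝ) / (m + 1) ∈ Set.Icc 0 1 := by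
  rw [Finset.mem_Icc] at hj
  refine ⟨by positivity, div_le_one_of_le₀ ?_ (by positivity)⟩
  exact_mod_cast hj.2.trans (Nat.le_succ m)

lemma le_card_grid_mem_Ioo (m : ℕ) {a b : ℝ} (ha : 0 ≤ a) (hb : b ≤ 1) :
    (b - a) * (m + 1) - 1 ≤ #{j ∈ Icc 1 m | ((j : ℕ) : ℝ) / (m + 1) ∈ Set.Ioo a b} := by
  have hm : (0 : ℝ) < m + 1 := by positivity
  set A := a * (m + 1)
  set B := b * (m + 1)
  have hA : 0 ≤ A := by positivity
  have hsub : Ioo ⌊A⌋₊ ⌈B⌉₊ ⊆ {j ∈ Icc 1 m | ((j : ℕ) : ℝ) / (m + 1) ∈ Set.Ioo a b} := by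
    intro j hj
    rw [Finset.mem_Ioo, Nat.floor_lt hA, Nat.lt_ceil] at hj
    have hjm : (j : ℝ) < m + 1 := hj.2.trans_le (by nlinarith)
    have hj0 : (0 : ℝ) < j := hA.trans_lt hj.1
    rw [Finset.mem_filter, Finset.mem_Icc]
    refine ⟨⟨by exact_mod_cast hj0, Nat.lt_succ_iff.1 (by exact_mod_cast hjm)⟩, ?_, ?_⟩
    · exact (lt_div_iff₀ hm).2 hj.1
    · exact (div_lt_iff₀ hm).2 hj.2
  have hIoo : (⌈B⌉₊ : ℝ) - ⌊A⌋₊ - 1 ≤ #(Ioo ⌊A⌋₊ ⌈B⌉₊) := by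
    have : ⌈B⌉₊ ≤ #(Ioo ⌊A⌋₊ ⌈B⌉₊) + ⌊A⌋₊ + 1 := by
      rw [Nat.card_Ioo]
      omega
    have : (⌈B⌉₊ : ℝ) ≤ #(Ioo ⌊A⌋₊ ⌈B⌉₊) + ⌊A⌋₊ + 1 := by exact_mod_cast this
    linarith
  calc (b - a) * (m + 1) - 1 = B - A - 1 := by ring
    _ ≤ ⌈B⌉₊ - ⌊A⌋₊ - 1 := by linarith [Nat.le_ceil B, Nat.floor_le hA]
    _ ≤ #(Ioo ⌊A⌋₊ ⌈B⌉₊) := hIoo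
    _ ≤ _ := by exact_mod_cast card_le_card hsub

lemma le_card_grid_abs_sub_lt (m : ℕ) {w r : ℝ} (hw : w ∈ Set.Icc 0 1) (hr : r ≤ 1) :
    r * (m + 1) - 1 ≤ #{j ∈ Icc 1 m | |((j : ℕ) : ℝ) / (m + 1) - w| < r} := by
  set a := min w (1 - r)
  have hwindow : ∀ x ∈ Set.Ioo a (a + r), |x - w| < r := by
    rintro x ⟨hax, hxa⟩
    rw [abs_sub_lt_iff]
    constructor <;> cases min_cases w (1 - r) <;> linarith [hw.2]
  calc r * (m + 1) - 1 = (a + r - a) * (m + 1) - 1 := by ring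
    _ ≤ #{j ∈ Icc 1 m | ((j : ℕ) : ℝ) / (m + 1) ∈ Set.Ioo a (a + r)} :=
        le_card_grid_mem_Ioo m (le_min hw.1 (by linarith)) (by linarith [min_le_right w (1 - r)])
    _ ≤ _ := by
        exact_mod_cast card_le_card (monotone_filter_right _ fun _ _ hx => hwindow _ hx)

theorem eventually_le_card_grid_abs_gt {f : ℝ × ℝ → ℝ}
    (hf : ContinuousOn f (Set.Icc 0 1 ×ˢ Set.Icc 0 1)) {u v : ℝ} (hu : u ∈ Set.Icc 0 1)
    (hv : v ∈ Set.Icc 0 1) (huv : f (u, v) ≠ 0) :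
    ∃ a₀ > (0 : ℝ), ∃ p₀ > (0 : ℝ), ∀ᶠ m : ℕ in atTop, p₀ * (m : ℝ) ^ 2 ≤
      #{jj ∈ Icc 1 m ×ˢ Icc 1 m | a₀ < |f ((jj.1 : ℝ) / (m + 1), (jj.2 : ℝ) / (m + 1))|} := by
  have hε : 0 < |f (u, v)| / 2 := by positivity
  obtain ⟨δ, hδ, hfδ⟩ := Metric.continuousWithinAt_iff.1 (hf (u, v) ⟨hu, hv⟩) _ hε
  set r := min δ 1
  have hr : 0 < r := lt_min hδ one_pos
  refine ⟨_, hε, r ^ 2 / 4, by positivity, ?_⟩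
  filter_upwards [eventually_ge_atTop ⌈2 / r⌉₊] with m hm
  have hrm : 2 ≤ r * m := by
    have := (Nat.ceil_le.1 hm)
    rwa [div_le_iff₀' hr] at this
  have hnear : ∀ w ∈ Set.Icc (0 : ℝ) 1,
      r * m / 2 ≤ #{j ∈ Icc 1 m | |((j : ℕ) : ℝ) / (m + 1) - w| < r} := fun w hw => by
    linarith [le_card_grid_abs_sub_lt m hw (min_le_right δ 1)]
  have hsub : {j ∈ Icc 1 m | |((j : ℕ) : ℝ) / (m + 1) - u| < r} ×ˢ
      {j ∈ Icc 1 m | |((j : ℕ) : ℝ) / (m + 1) - v| < r} ⊆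
      {jj ∈ Icc 1 m ×ˢ Icc 1 m | |f (u, v)| / 2 <
        |f ((jj.1 : ℝ) / (m + 1), (jj.2 : ℝ) / (m + 1))|} := by
    rintro ⟨i, j⟩ hij
    simp only [mem_product, mem_filter] at hij ⊢
    obtain ⟨⟨hi, hiu⟩, ⟨hj, hjv⟩⟩ := hij
    refine ⟨⟨hi, hj⟩, ?_⟩
    have hdist : dist ((i : ℝ) / (m + 1), (j : ℝ) / (m + 1)) (u, v) < δ := by
      rw [Prod.dist_eq, Real.dist_eq, Real.dist_eq]
      exact max_lt (hiu.trans_le (min_le_left _ _)) (hjv.trans_le (min_le_left _ _))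
    have hclose := hfδ ⟨grid_mem_Icc hi, grid_mem_Icc hj⟩ hdist
    rw [Real.dist_eq] at hclose
    linarith [abs_sub_abs_le_abs_sub (f (u, v)) (f ((i : ℝ) / (m + 1), (j : ℝ) / (m + 1))),
      abs_sub_comm (f (u, v)) (f ((i : ℝ) / (m + 1), (j : ℝ) / (m + 1)))]
  calc r ^ 2 / 4 * (m : ℝ) ^ 2 = (r * m / 2) * (r * m / 2) := by ring
    _ ≤ #{j ∈ Icc 1 m | |((j : ℕ) : ℝ) / (m + 1) - u| < r} *
          #{j ∈ Icc 1 m | |((j : ℕ) : ℝ) / (m + 1) - v| < r} :=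
        mul_le_mul (hnear u hu) (hnear v hv) (by positivity) (by positivity)
    _ ≤ _ := by
        rw [← Nat.cast_mul, ← card_product]
        exact_mod_cast card_le_card hsub

theorem stmt_19_general (C : ℝ → ℝ → ℝ)
    (hcont : ContinuousOn (fun p : ℝ × ℝ => C p.1 p.2) (Set.Icc 0 1 ×ˢ Set.Icc 0 1))
    (hne : ∃ u ∈ Set.Icc (0:ℝ) 1, ∃ v ∈ Set.Icc (0:ℝ) 1, C u v ≠ u * v)
    (d : ℕ → ℕ) (hd : Filter.Tendsto d Filter.atTop Filter.atTop) :
    ∃ n₀ : ℕ, ∃ a₀ > (0:ℝ), ∃ p₀ > (0:ℝ), ∀ n > n₀,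
      p₀ * (d n : ℝ)^2 ≤
        (((Finset.Icc 1 (d n) ×ˢ Finset.Icc 1 (d n)).filter
          (fun jj : ℕ × ℕ =>
            a₀ < |C ((jj.1 : ℝ) / ((d n : ℝ) + 1)) ((jj.2 : ℝ) / ((d n : ℝ) + 1))
              - (jj.1 : ℝ) / ((d n : ℝ) + 1) * ((jj.2 : ℝ) / ((d n : ℝ) + 1))|)).card : ℝ) := by
  obtain ⟨u, hu, v, hv, huv⟩ := hne
  obtain ⟨a₀, ha₀, p₀, hp₀, hcount⟩ := eventually_le_card_grid_abs_gt
    (hcont.sub (continuous_fst.mul continuous_snd).continuousOn) hu hv (sub_ne_zero.2 huv)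
  obtain ⟨n₀, hn₀⟩ := (hd.eventually hcount).exists_forall_of_atTop
  exact ⟨n₀, a₀, ha₀, p₀, hp₀, fun n hn => hn₀ n hn.le⟩

/-- If `d(n) → ∞`, `d(n)/√n → 0`, and `C` is a continuous copula not identically equal to
`uv`, then there exist `n₀`, `a₀ > 0`, `p₀ > 0` such that for all `n > n₀` at least
`p₀·d(n)²` of the grid points `(j/(d(n)+1), j'/(d(n)+1))`, `1 ≤ j,j' ≤ d(n)`, satisfy
`|C(p,p') − p·p'| > a₀`. -/
theorem stmt_19 (C : ℝ → ℝ → ℝ) (hC : IsCopula C)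
    (hcont : ContinuousOn (fun p : ℝ × ℝ => C p.1 p.2) (Set.Icc 0 1 ×ˢ Set.Icc 0 1))
    (hne : ∃ u ∈ Set.Icc (0:ℝ) 1, ∃ v ∈ Set.Icc (0:ℝ) 1, C u v ≠ u * v)
    (d : ℕ → ℕ) (hd : Filter.Tendsto d Filter.atTop Filter.atTop)
    (hds : Filter.Tendsto (fun n => (d n : ℝ) / Real.sqrt n) Filter.atTop (nhds 0)) :
    ∃ n₀ : ℕ, ∃ a₀ > (0:ℝ), ∃ p₀ > (0:ℝ), ∀ n > n₀,
      p₀ * (d n : ℝ)^2 ≤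
        (((Finset.Icc 1 (d n) ×ˢ Finset.Icc 1 (d n)).filter
          (fun jj : ℕ × ℕ =>
            a₀ < |C ((jj.1 : ℝ) / ((d n : ℝ) + 1)) ((jj.2 : ℝ) / ((d n : ℝ) + 1))
              - (jj.1 : ℝ) / ((d n : ℝ) + 1) * ((jj.2 : ℝ) / ((d n : ℝ) + 1))|)).card : ℝ) :=
  stmt_19_general C hcont hne d hd
end
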